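/- Let f : {-1,1}^n → ℝ satisfy Σ_{S⊆{1,...,n}} |f̂(S)| ≤ s and be (ε/4, d)-concentrated, i.e., Σ_{S : |S| > d} f̂(S)² ≤ ε/4. Let h be the polynomial consisting of the constant term of f together with all Fourier terms of f of degree at most d whose coefficient has magnitude at least ε/(4s), and set g = f − h. Then E_{x uniform on {-1,1}^n}[g(x)²] = Σ_{S : |S| > d} f̂(S)² + Σ_{R : |R| ≤ d, R ≠ ∅, |f̂(R)| < ε/(4s)} f̂(R)² ≤ ε/2. -/

import Mathlib

/-
Fourier inversion shows that `g` agrees on the cube with the sum of the Fourier terms of `f`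
whose index is not kept in `h`, so by orthogonality of the characters `E[g²]` is the sum of
their squared coefficients. These indices are the sets of degree above `d` and the nonempty
low-degree sets with a small coefficient. The first part has mass at most `ε/4` by
concentration, and since `f̂(R)² ≤ ε/(4s) · |f̂(R)|` for each small coefficient, the second has
mass at most `ε/(4s) · s = ε/4`.
-/

open Finset
open scoped Classical

noncomputable def cube (n : ℕ) : Finset (Fin n → ℝ) :=
  Fintype.piFinset fun _ => ({-1, 1} : Finset ℝ)

def chi {n : ℕ} (S : Finset (Fin n)) (x : Fin n → ℝ) : ℝ := ∏ i ∈ S, x i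

noncomputable def expectation {n : ℕ} (g : (Fin n → ℝ) → ℝ) : ℝ :=
  (2 ^ n : ℝ)⁻¹ * ∑ x ∈ cube n, g x

noncomputable def fhat {n : ℕ} (f : (Fin n → ℝ) → ℝ) (S : Finset (Fin n)) : ℝ :=
  expectation fun x => f x * chi S x

lemma mem_cube_iff {n : ℕ} {x : Fin n → ℝ} : x ∈ cube n ↔ ∀ i, x i = -1 ∨ x i = 1 := by
  simp [cube, Fintype.mem_piFinset]

lemma prod_ite_const_zero {M₀ : Type*} [CommMonoidWithZero M₀] {n : ℕ} (p : Fin n → Prop)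
    [DecidablePred p] (a : M₀) :
    (∏ i, if p i then a else 0) = if ∀ i, p i then a ^ n else 0 := by
  simp [Finset.prod_ite_zero]

lemma chi_eq_prod_univ {n : ℕ} (S : Finset (Fin n)) (x : Fin n → ℝ) :
    chi S x = ∏ i, if i ∈ S then x i else 1 := by
  rw [prod_ite_mem, univ_inter, chi]

lemma sum_cube_chi_mul_chi {n : ℕ} (S T : Finset (Fin n)) :
    ∑ x ∈ cube n, chi S x * chi T x = if S = T then 2 ^ n else 0 := by
  have factor : ∀ i, ∑ a ∈ ({-1, 1} : Finset ℝ),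
      (if i ∈ S then a else 1) * (if i ∈ T then a else 1)
        = if (i ∈ S ↔ i ∈ T) then 2 else 0 := by
    intro i
    rw [sum_pair (by norm_num)]
    by_cases hS : i ∈ S <;> by_cases hT : i ∈ T <;> simp [hS, hT] <;> norm_num
  calc ∑ x ∈ cube n, chi S x * chi T x
      = ∏ i, ∑ a ∈ ({-1, 1} : Finset ℝ), (if i ∈ S then a else 1) * (if i ∈ T then a else 1) := by
        simp_rw [prod_univ_sum, chi_eq_prod_univ, prod_mul_distrib, cube]
    _ = if S = T then 2 ^ n else 0 := by
        simp_rw [factor, prod_ite_const_zero, ← Finset.ext_iff]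

lemma sum_chi_mul_chi_of_mem_cube {n : ℕ} {x y : Fin n → ℝ} (hx : x ∈ cube n)
    (hy : y ∈ cube n) :
    ∑ S, chi S x * chi S y = if x = y then 2 ^ n else 0 := by
  have factor : ∀ i, x i * y i + 1 = if x i = y i then 2 else 0 := by
    intro i
    rcases mem_cube_iff.1 hx i with h | h <;> rcases mem_cube_iff.1 hy i with h' | h' <;>
      norm_num [h, h']
  -- `∑ S, ∏ i ∈ S, x i * y i = ∏ i, (x i * y i + 1)`, and a factor vanishes where `x i ≠ y i`.
  simp_rw [chi, ← prod_mul_distrib, ← powerset_univ, ← prod_add_one, factor,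
    prod_ite_const_zero, ← funext_iff]

theorem sum_fhat_mul_chi {n : ℕ} (f : (Fin n → ℝ) → ℝ) {x : Fin n → ℝ} (hx : x ∈ cube n) :
    ∑ S, fhat f S * chi S x = f x := by
  calc ∑ S, fhat f S * chi S x
      = (2 ^ n : ℝ)⁻¹ * ∑ y ∈ cube n, f y * ∑ S, chi S y * chi S x := by
        simp_rw [fhat, expectation, mul_assoc, ← mul_sum, sum_mul, mul_assoc, mul_sum]
        rw [sum_comm]
    _ = (2 ^ n : ℝ)⁻¹ * ∑ y ∈ cube n, if y = x then f y * 2 ^ n else 0 := by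
        congr 1
        refine sum_congr rfl fun y hy => ?_
        rw [sum_chi_mul_chi_of_mem_cube hy hx, mul_ite, mul_zero]
    _ = f x := by
        rw [sum_ite_eq' _ _ (fun y => f y * 2 ^ n), if_pos hx]
        field_simp

lemma expectation_congr {n : ℕ} {g g' : (Fin n → ℝ) → ℝ} (h : ∀ x ∈ cube n, g x = g' x) :
    expectation g = expectation g' := by
  rw [expectation, expectation, sum_congr rfl h]

theorem expectation_sum_mul_chi_sq {n : ℕ} (A : Finset (Finset (Fin n)))
    (c : Finset (Fin n) → ℝ) :
    expectation (fun x => (∑ S ∈ A, c S * chi S x) ^ 2) = ∑ S ∈ A, c S ^ 2 := by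
  calc expectation (fun x => (∑ S ∈ A, c S * chi S x) ^ 2)
      = (2 ^ n : ℝ)⁻¹ * ∑ S ∈ A, ∑ T ∈ A, c S * c T * ∑ x ∈ cube n, chi S x * chi T x := by
        rw [expectation]
        congr 1
        simp_rw [sq, sum_mul_sum, mul_sum]
        rw [sum_comm]
        refine sum_congr rfl fun S _ => ?_
        rw [sum_comm]
        exact sum_congr rfl fun T _ => sum_congr rfl fun x _ => by ring
    _ = (2 ^ n : ℝ)⁻¹ * ∑ S ∈ A, c S ^ 2 * 2 ^ n := by
        simp_rw [sum_cube_chi_mul_chi, mul_ite, mul_zero, sum_ite_eq, sq]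
        simp
    _ = ∑ S ∈ A, c S ^ 2 := by
        rw [← sum_mul]
        field_simp

lemma sum_sq_le_of_abs_lt_div {ι : Type*} (B : Finset ι) (c : ι → ℝ) {t s : ℝ} (ht : 0 ≤ t)
    (hc : ∀ i ∈ B, |c i| < t / s) (hs : ∑ i ∈ B, |c i| ≤ s) :
    ∑ i ∈ B, c i ^ 2 ≤ t := by
  have hs0 : 0 ≤ s := (sum_nonneg fun i _ => abs_nonneg (c i)).trans hs
  calc ∑ i ∈ B, c i ^ 2
      = ∑ i ∈ B, |c i| * |c i| := by simp_rw [← sq, sq_abs]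
    _ ≤ ∑ i ∈ B, t / s * |c i| :=
        sum_le_sum fun i hi => mul_le_mul_of_nonneg_right (hc i hi).le (abs_nonneg _)
    _ ≤ t / s * s := by rw [← mul_sum]; exact mul_le_mul_of_nonneg_left hs (by positivity)
    _ ≤ t := by
        rcases hs0.eq_or_lt with rfl | hs_pos
        · simpa using ht
        · rw [div_mul_cancel₀ _ hs_pos.ne']

lemma univ_sdiff_insert_empty_filter {n : ℕ} (d : ℕ) (c : Finset (Fin n) → ℝ) (t : ℝ) :
    univ \ insert ∅ (univ.filter fun S : Finset (Fin n) => S.card ≤ d ∧ t ≤ |c S|)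
      = univ.filter (fun S => d < S.card)
        ∪ univ.filter (fun R => R.card ≤ d ∧ R ≠ ∅ ∧ |c R| < t) := by
  ext S
  simp only [mem_sdiff, mem_insert, mem_filter, mem_union, mem_univ, true_and]
  rcases eq_or_ne S ∅ with rfl | hS
  · simp
  · by_cases hd : d < #S
    · simp [hS, hd]
    · simp [hS, hd, not_lt.1 hd]

/-- For f that is (ε/4,d)-concentrated with Fourier L1 norm at most s, let h keep the
constant term together with all degree-≤-d terms of coefficient magnitude at least ε/(4s),
and let g = f - h.  Then E[g²] equals the Fourier mass of f above degree d plus the mass of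
the small nonconstant low-degree coefficients, and this is at most ε/2. -/
theorem tail_mass_bound (n d : ℕ) (f : (Fin n → ℝ) → ℝ) (s ε : ℝ)
    (hL1 : ∑ S : Finset (Fin n), |fhat f S| ≤ s)
    (hconc : ∑ S ∈ Finset.univ.filter (fun S : Finset (Fin n) => d < S.card),
        fhat f S ^ 2 ≤ ε / 4)
    (h g : (Fin n → ℝ) → ℝ)
    (hh : h = fun x =>
      ∑ S ∈ insert (∅ : Finset (Fin n))
          (Finset.univ.filter fun S : Finset (Fin n) =>
            S.card ≤ d ∧ ε / (4 * s) ≤ |fhat f S|),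
        fhat f S * chi S x)
    (hg : ∀ x, g x = f x - h x) :
    expectation (fun x => g x ^ 2)
        = ∑ S ∈ Finset.univ.filter (fun S : Finset (Fin n) => d < S.card), fhat f S ^ 2
          + ∑ R ∈ Finset.univ.filter (fun R : Finset (Fin n) =>
              R.card ≤ d ∧ R ≠ ∅ ∧ |fhat f R| < ε / (4 * s)), fhat f R ^ 2 ∧
    expectation (fun x => g x ^ 2) ≤ ε / 2 := by
  set K := insert (∅ : Finset (Fin n))
    (univ.filter fun S : Finset (Fin n) => S.card ≤ d ∧ ε / (4 * s) ≤ |fhat f S|)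
  set high := univ.filter fun S : Finset (Fin n) => d < S.card
  set small := univ.filter fun R : Finset (Fin n) =>
    R.card ≤ d ∧ R ≠ ∅ ∧ |fhat f R| < ε / (4 * s)
  have hg_cube : ∀ x ∈ cube n, g x = ∑ S ∈ univ \ K, fhat f S * chi S x := fun x hx => by
    rw [hg, hh, sum_sdiff_eq_sub (subset_univ K), sum_fhat_mul_chi f hx]
  have hdisj : Disjoint high small := disjoint_filter.2 fun S _ h1 h2 => by omega
  have hE : expectation (fun x => g x ^ 2)
      = ∑ S ∈ high, fhat f S ^ 2 + ∑ R ∈ small, fhat f R ^ 2 := by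
    rw [expectation_congr fun x hx => by rw [hg_cube x hx], expectation_sum_mul_chi_sq,
      univ_sdiff_insert_empty_filter, sum_union hdisj]
  have hε : 0 ≤ ε := by linarith [sum_nonneg fun S (_ : S ∈ high) => sq_nonneg (fhat f S)]
  have hsmall : ∑ R ∈ small, fhat f R ^ 2 ≤ ε / 4 :=
    sum_sq_le_of_abs_lt_div small _ (by positivity)
      (fun R hR => by simpa only [div_div] using (mem_filter.1 hR).2.2.2)
      ((sum_le_sum_of_subset_of_nonneg (subset_univ _) fun _ _ _ => abs_nonneg _).trans hL1)
  exact ⟨hE, by linarith⟩
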